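/- arXiv:1506.05956 — 4 statements merged into one kernel-verified Lean document; each statement's English description precedes it below -/
import Mathlib

section
/- In ℚ₂, the norm group N(-1) := Norm(ℚ₂(√-1)^×) is the subgroup of ℚ₂^× generated by 2, 5, and the squares (ℚ₂^×)²; in particular -1 is not a sum of two squares in ℚ₂. -/
/-!
Dividing by the summand of larger norm writes every sum of two squares as `w² (1 + t²)` with
`t ∈ ℤ₂`. Modulo 16, `1 + t²` is `1`, `2`, `5` or `10`; multiplying by `5` and dividing by `2`
where needed lands in `1 + 8ℤ₂`, which consists of squares by Hensel's lemma. Conversely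
`2 = 1² + 1²`, `5 = 1² + 2²`, and sums of two squares are closed under multiplication.
If `-1 = w² (1 + t²)`, then `w⁻¹` is integral and `t² + w⁻² + 1 = 0` in `ℤ₂`, which fails modulo 4.
-/

open Polynomial

def sumTwoSquares (R : Type*) [CommRing R] : Submonoid R where
  carrier := {x | ∃ a b : R, x = a ^ 2 + b ^ 2}
  one_mem' := ⟨1, 0, by ring⟩
  mul_mem' := by
    rintro _ _ ⟨a, b, rfl⟩ ⟨c, d, rfl⟩
    exact ⟨_, _, sq_add_sq_mul_sq_add_sq⟩

namespace PadicInt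

variable {p : ℕ} [Fact p.Prime]

theorem exists_eq_add_pow_mul_of_toZModPow_eq {n : ℕ} {x y : ℤ_[p]}
    (h : toZModPow n x = toZModPow n y) : ∃ k : ℤ_[p], x = y + (p : ℤ_[p]) ^ n * k := by
  have hxy : x - y ∈ RingHom.ker (toZModPow n : ℤ_[p] →+* ZMod (p ^ n)) := by
    rw [RingHom.mem_ker, map_sub, h, sub_self]
  rw [ker_toZModPow, Ideal.mem_span_singleton] at hxy
  obtain ⟨k, hk⟩ := hxy
  exact ⟨k, eq_add_of_sub_eq' hk⟩

theorem isSquare_one_add_eight_mul (k : ℤ_[2]) : IsSquare (1 + 8 * k) := by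
  have h2 : ‖(2 : ℤ_[2])‖ = 2⁻¹ := by simpa using norm_p (p := 2)
  have hnorm : ‖(8 * k : ℤ_[2])‖ < 2⁻¹ ^ 2 := calc
    ‖(8 * k : ℤ_[2])‖ = 2⁻¹ ^ 3 * ‖k‖ := by
      rw [norm_mul, show (8 : ℤ_[2]) = 2 ^ 3 by norm_num, norm_pow, h2]
    _ ≤ 2⁻¹ ^ 3 := mul_le_of_le_one_right (by positivity) k.norm_le_one
    _ < 2⁻¹ ^ 2 := by norm_num
  obtain ⟨z, hz, -⟩ := hensels_lemma (p := 2) (F := X ^ 2 - C (1 + 8 * k)) (a := 1)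
    (by simpa [derivative_pow, h2] using hnorm)
  simp only [map_sub, aeval_X_pow, aeval_C, Algebra.algebraMap_self, RingHom.id_apply,
    sub_eq_zero] at hz
  exact ⟨z, by rw [← hz, sq]⟩

theorem exists_five_pow_mul_one_add_sq_eq (t : ℤ_[2]) :
    ∃ (i j : ℕ) (z : ℤ_[2]), 5 ^ j * (1 + t ^ 2) = 2 ^ i * z ^ 2 := by
  have hres : ∀ a : ZMod (2 ^ 4),
      1 + a ^ 2 = 1 ∨ 1 + a ^ 2 = 2 ∨ 1 + a ^ 2 = 5 ∨ 1 + a ^ 2 = 10 := by decide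
  have hlift (r : ℕ) (hr : 1 + toZModPow 4 t ^ 2 = r) : ∃ k : ℤ_[2], 1 + t ^ 2 = r + 16 * k := by
    obtain ⟨k, hk⟩ := exists_eq_add_pow_mul_of_toZModPow_eq (n := 4) (x := 1 + t ^ 2) (y := r)
      (by simpa using hr)
    exact ⟨k, by rw [hk]; norm_num⟩
  rcases hres (toZModPow 4 t) with h | h | h | h
  · obtain ⟨k, hk⟩ := hlift 1 (by exact_mod_cast h)
    obtain ⟨z, hz⟩ := isSquare_one_add_eight_mul (2 * k)
    exact ⟨0, 0, z, by push_cast at hk; linear_combination hk + hz⟩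
  · obtain ⟨k, hk⟩ := hlift 2 (by exact_mod_cast h)
    obtain ⟨z, hz⟩ := isSquare_one_add_eight_mul k
    exact ⟨1, 0, z, by push_cast at hk; linear_combination hk + 2 * hz⟩
  · obtain ⟨k, hk⟩ := hlift 5 (by exact_mod_cast h)
    obtain ⟨z, hz⟩ := isSquare_one_add_eight_mul (3 + 10 * k)
    exact ⟨0, 1, z, by push_cast at hk; linear_combination 5 * hk + hz⟩
  · obtain ⟨k, hk⟩ := hlift 10 (by exact_mod_cast h)
    obtain ⟨z, hz⟩ := isSquare_one_add_eight_mul (3 + 5 * k)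
    exact ⟨1, 1, z, by push_cast at hk; linear_combination 5 * hk + 2 * hz⟩

theorem sq_add_sq_add_one_ne_zero (a b : ℤ_[2]) : a ^ 2 + b ^ 2 + 1 ≠ 0 := by
  have hmod4 : ∀ x y : ZMod (2 ^ 2), x ^ 2 + y ^ 2 + 1 ≠ 0 := by decide
  intro h
  exact hmod4 (toZModPow 2 a) (toZModPow 2 b) (by simpa using congrArg (toZModPow 2) h)

end PadicInt

namespace Padic

variable {p : ℕ} [Fact p.Prime]

theorem exists_sq_add_sq_eq_sq_mul_one_add_sq (u v : ℚ_[p]) :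
    ∃ (w : ℚ_[p]) (t : ℤ_[p]), u ^ 2 + v ^ 2 = w ^ 2 * (1 + (t : ℚ_[p]) ^ 2) := by
  wlog huv : ‖u‖ ≤ ‖v‖ generalizing u v
  · obtain ⟨w, t, h⟩ := this v u (le_of_not_ge huv)
    exact ⟨w, t, by rw [add_comm, h]⟩
  rcases eq_or_ne v 0 with rfl | hv
  · exact ⟨0, 0, by simpa using huv⟩
  · refine ⟨v, ⟨u / v, by rw [norm_div]; exact div_le_one_of_le₀ huv (norm_nonneg _)⟩, ?_⟩
    change u ^ 2 + v ^ 2 = v ^ 2 * (1 + (u / v) ^ 2)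
    field_simp
    ring

theorem exists_sq_add_sq_eq_two_pow_mul_five_pow_mul_sq (u v : ℚ_[2]) :
    ∃ (i j : ℕ) (z : ℚ_[2]), u ^ 2 + v ^ 2 = 2 ^ i * 5 ^ j * z ^ 2 := by
  obtain ⟨w, t, hwt⟩ := exists_sq_add_sq_eq_sq_mul_one_add_sq u v
  obtain ⟨i, j, z, hz⟩ := PadicInt.exists_five_pow_mul_one_add_sq_eq t
  have hzQ : 5 ^ j * (1 + (t : ℚ_[2]) ^ 2) = 2 ^ i * (z : ℚ_[2]) ^ 2 := by
    exact_mod_cast congrArg ((↑) : ℤ_[2] → ℚ_[2]) hz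
  refine ⟨i, j, w * z / 5 ^ j, ?_⟩
  rw [hwt]
  field_simp
  linear_combination w ^ 2 * hzQ

theorem not_exists_sq_add_sq_eq_neg_one : ¬ ∃ u v : ℚ_[2], (-1 : ℚ_[2]) = u ^ 2 + v ^ 2 := by
  rintro ⟨u, v, h⟩
  obtain ⟨w, t, hwt⟩ := exists_sq_add_sq_eq_sq_mul_one_add_sq u v
  rw [← h] at hwt
  have hw : w ≠ 0 := by rintro rfl; norm_num at hwt
  have hs : w⁻¹ ^ 2 = -(1 + (t : ℚ_[2]) ^ 2) := by
    field_simp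
    linear_combination -hwt
  have hs_le : ‖w⁻¹‖ ≤ 1 := by
    rw [← pow_le_one_iff_of_nonneg (norm_nonneg _) two_ne_zero, ← norm_pow, hs, norm_neg]
    exact (1 + t ^ 2).norm_le_one
  let s : ℤ_[2] := ⟨w⁻¹, hs_le⟩
  have hs_coe : (s : ℚ_[2]) = w⁻¹ := rfl
  apply PadicInt.sq_add_sq_add_one_ne_zero t s
  rw [← PadicInt.coe_eq_zero]
  push_cast [hs_coe]
  linear_combination hs

end Padic

/-- In ℚ₂ the norm group N(-1) = Norm(ℚ₂(√-1)ˣ), i.e. the set of nonzero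
sums of two squares, is the subgroup of ℚ₂ˣ generated by 2, 5 and the
squares; in particular -1 is not a sum of two squares in ℚ₂. -/
theorem stmt_3 :
    ({x : ℚ_[2] | x ≠ 0 ∧ ∃ u v : ℚ_[2], x = u ^ 2 + v ^ 2} =
      {x : ℚ_[2] | ∃ (i j : ℕ) (z : ℚ_[2]), z ≠ 0 ∧ x = 2 ^ i * 5 ^ j * z ^ 2}) ∧
    ¬ ∃ u v : ℚ_[2], (-1 : ℚ_[2]) = u ^ 2 + v ^ 2 := by
  refine ⟨Set.ext fun x => ⟨?_, ?_⟩, Padic.not_exists_sq_add_sq_eq_neg_one⟩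
  · rintro ⟨hx, u, v, rfl⟩
    obtain ⟨i, j, z, h⟩ := Padic.exists_sq_add_sq_eq_two_pow_mul_five_pow_mul_sq u v
    exact ⟨i, j, z, by rintro rfl; simp_all, h⟩
  · rintro ⟨i, j, z, hz, rfl⟩
    have h2 : (2 : ℚ_[2]) ∈ sumTwoSquares ℚ_[2] := ⟨1, 1, by norm_num⟩
    have h5 : (5 : ℚ_[2]) ∈ sumTwoSquares ℚ_[2] := ⟨1, 2, by norm_num⟩
    have hz2 : z ^ 2 ∈ sumTwoSquares ℚ_[2] := ⟨z, 0, by ring⟩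
    exact ⟨by simp [hz], mul_mem (mul_mem (pow_mem h2 i) (pow_mem h5 j)) hz2⟩
end

section
/- Let T = N(5) ⊆ ℚ₂^× ∪ {0} with O₁(T) = {x : x ∉ T, 1+x ∈ T} (together with 0). Then O₁(T) consists exactly of the 2-adic numbers with positive odd valuation (and 0), O₂(T) consists of the 2-adic integers with even valuation, and O(T) = O₁(T) ∪ O₂(T) = ℤ₂. -/
/-!
Norms from `ℚ₂(√5)` are exactly the elements of even valuation. Writing a norm as
`v² (r² - 5)` with `r = u / v` reduces one direction to `r² - 5`: its valuation is `2 v(r)` when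
`v(r) < 0`, and otherwise `r² - 5` is a `2`-adic integer congruent to `3`, `4` or `7` mod `8`.
Conversely, every unit `w` of `ℤ₂` becomes `≡ 1 (mod 8)` after multiplication by one of the norms
`±1, ±5`, and is then a square by Hensel's lemma.

With `T` identified, the rest is the ultrametric inequality: for `v(x) ≠ 0` the valuation of
`1 + x` is `min 0 v(x)`, and `x · 2 ∈ O₁` forces `v(x) ≥ 0`.
-/

namespace Padic

variable {p : ℕ} [Fact p.Prime]

theorem valuation_eq_of_norm_eq {x y : ℚ_[p]} (h : ‖x‖ = ‖y‖) : x.valuation = y.valuation := by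
  rcases eq_or_ne x 0 with rfl | hx
  · rw [norm_zero, eq_comm, norm_eq_zero] at h
    rw [h]
  have hy : y ≠ 0 := norm_ne_zero_iff.mp (h ▸ norm_ne_zero_iff.mpr hx)
  rw [norm_eq_zpow_neg_valuation hx, norm_eq_zpow_neg_valuation hy,
    zpow_right_inj₀ (by exact_mod_cast (Fact.out : p.Prime).pos)
      (by exact_mod_cast (Fact.out : p.Prime).ne_one), neg_inj] at h
  exact h

theorem valuation_neg (x : ℚ_[p]) : (-x).valuation = x.valuation :=
  valuation_eq_of_norm_eq (norm_neg x)

theorem norm_lt_norm_of_valuation_lt {x y : ℚ_[p]} (hx : x ≠ 0)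
    (h : x.valuation < y.valuation) : ‖y‖ < ‖x‖ := by
  rcases eq_or_ne y 0 with rfl | hy
  · simpa using hx
  rw [norm_eq_zpow_neg_valuation hx, norm_eq_zpow_neg_valuation hy]
  exact zpow_lt_zpow_right₀ (by exact_mod_cast (Fact.out : p.Prime).one_lt) (neg_lt_neg h)

theorem norm_add_eq_of_norm_lt {x y : ℚ_[p]} (h : ‖y‖ < ‖x‖) : ‖x + y‖ = ‖x‖ := by
  rw [add_eq_max_of_ne h.ne', max_eq_left h.le]

theorem valuation_add_of_norm_lt {x y : ℚ_[p]} (h : ‖y‖ < ‖x‖) :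
    (x + y).valuation = x.valuation :=
  valuation_eq_of_norm_eq (norm_add_eq_of_norm_lt h)

theorem valuation_add_of_valuation_lt {x y : ℚ_[p]} (hx : x ≠ 0)
    (h : x.valuation < y.valuation) : (x + y).valuation = x.valuation :=
  valuation_add_of_norm_lt (norm_lt_norm_of_valuation_lt hx h)

theorem add_ne_zero_of_valuation_lt {x y : ℚ_[p]} (hx : x ≠ 0)
    (h : x.valuation < y.valuation) : x + y ≠ 0 := by
  rw [← norm_ne_zero_iff, norm_add_eq_of_norm_lt (norm_lt_norm_of_valuation_lt hx h)]
  exact norm_ne_zero_iff.mpr hx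

end Padic

namespace PadicInt

variable {p : ℕ} [Fact p.Prime]

theorem le_valuation_iff_toZModPow_eq_zero {z : ℤ_[p]} (hz : z ≠ 0) (n : ℕ) :
    n ≤ z.valuation ↔ toZModPow n z = 0 := by
  rw [← mem_span_pow_iff_le_valuation z hz, ← ker_toZModPow, RingHom.mem_ker]

theorem even_valuation_sq_sub_five (s : ℤ_[2]) : Even (s ^ 2 - 5).valuation := by
  set z := s ^ 2 - 5
  have hres : toZModPow 1 z = 1 ∨ toZModPow 3 z = 4 := by
    rw [← cast_toZModPow 1 3 (by norm_num)]
    simp only [z, map_sub, map_pow, map_ofNat]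
    generalize toZModPow 3 s = a
    revert a
    decide
  have hz : z ≠ 0 := by
    rintro h
    simp only [h, map_zero] at hres
    revert hres
    decide
  rcases hres with hodd | h4
  · have : ¬ 1 ≤ z.valuation := by rw [le_valuation_iff_toZModPow_eq_zero hz, hodd]; decide
    simp [show z.valuation = 0 by omega]
  · have h2 : 2 ≤ z.valuation := by
      rw [le_valuation_iff_toZModPow_eq_zero hz, ← cast_toZModPow 2 3 (by norm_num), h4]; decide
    have h3 : ¬ 3 ≤ z.valuation := by rw [le_valuation_iff_toZModPow_eq_zero hz, h4]; decide
    exact ⟨1, by omega⟩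

theorem isSquare_of_toZModPow_three_eq_one {w : ℤ_[2]} (hw : toZModPow 3 w = 1) : IsSquare w := by
  have h8 : ‖w - 1‖ ≤ (2 : ℝ) ^ (-3 : ℤ) := by
    rw [show (2 : ℝ) = ((2 : ℕ) : ℝ) by norm_num, show (-3 : ℤ) = -((3 : ℕ) : ℤ) by norm_num,
      norm_le_pow_iff_mem_span_pow, ← ker_toZModPow, RingHom.mem_ker, map_sub, hw, map_one,
      sub_self]
  have hnorm : ‖(Polynomial.X ^ 2 - Polynomial.C w).aeval (1 : ℤ_[2])‖ <
      ‖(Polynomial.X ^ 2 - Polynomial.C w).derivative.aeval (1 : ℤ_[2])‖ ^ 2 := by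
    have h2 : ‖(2 : ℤ_[2])‖ = 2⁻¹ := by exact_mod_cast norm_p (p := 2)
    simp only [map_sub, map_pow, Polynomial.aeval_X, Polynomial.aeval_C,
      Polynomial.derivative_X_pow, Polynomial.derivative_C]
    norm_num [norm_sub_rev, h2]
    exact h8.trans_lt (by norm_num)
  obtain ⟨s, hs, -⟩ := hensels_lemma hnorm
  exact ⟨s, by simpa [sub_eq_zero, sq, eq_comm] using hs⟩

theorem exists_toZModPow_three_mul_eq_one {w : ℤ_[2]} (hw : IsUnit w) :
    ∃ c ∈ ({1, -1, 5, -5} : Finset ℤ), toZModPow 3 (w * (c : ℤ_[2])) = 1 := by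
  have key : ∀ a : ZMod (2 ^ 3), IsUnit a →
      ∃ c ∈ ({1, -1, 5, -5} : Finset ℤ), a * (c : ZMod (2 ^ 3)) = 1 := by decide
  simpa only [map_mul, map_intCast] using key _ (hw.map (toZModPow 3))

theorem exists_sq_sub_five_mul_sq_of_isUnit {w : ℤ_[2]} (hw : IsUnit w) :
    ∃ a b : ℚ_[2], (w : ℚ_[2]) = a ^ 2 - 5 * b ^ 2 := by
  obtain ⟨c, hc, hwc⟩ := exists_toZModPow_three_mul_eq_one hw
  simp only [Finset.mem_insert, Finset.mem_singleton] at hc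
  obtain ⟨s, hs⟩ := isSquare_of_toZModPow_three_eq_one hwc
  obtain ⟨a, b, hab⟩ : ∃ a b : ℤ, c = a ^ 2 - 5 * b ^ 2 := by
    rcases hc with rfl | rfl | rfl | rfl
    exacts [⟨1, 0, rfl⟩, ⟨2, 1, rfl⟩, ⟨5, 2, rfl⟩, ⟨0, 1, rfl⟩]
  have hc0 : (c : ℚ_[2]) ≠ 0 := Int.cast_ne_zero.mpr (by omega)
  have hs' : (w : ℚ_[2]) * c = s * s := by exact_mod_cast congrArg ((↑) : ℤ_[2] → ℚ_[2]) hs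
  refine ⟨a * s / c, b * s / c, ?_⟩
  have hab' : (c : ℚ_[2]) = a ^ 2 - 5 * b ^ 2 := by exact_mod_cast hab
  field_simp
  linear_combination (c : ℚ_[2]) * hs' + (s : ℚ_[2]) ^ 2 * hab'

end PadicInt

namespace Padic

theorem even_valuation_sq_sub_five (r : ℚ_[2]) : Even (r ^ 2 - 5).valuation := by
  rcases lt_or_ge r.valuation 0 with hr | hr
  · have hr0 : r ≠ 0 := by rintro rfl; simp at hr
    have h5 : (-5 : ℚ_[2]).valuation = 0 := by
      rw [valuation_neg, valuation_ofNat]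
      norm_num [padicValNat.eq_zero_of_not_dvd]
    have hlt : (r ^ 2).valuation < (-5 : ℚ_[2]).valuation := by simp only [valuation_pow, h5]; omega
    rw [sub_eq_add_neg, valuation_add_of_valuation_lt (pow_ne_zero 2 hr0) hlt, valuation_pow]
    exact ⟨r.valuation, by push_cast; ring⟩
  · obtain ⟨s, rfl⟩ : ∃ s : ℤ_[2], (s : ℚ_[2]) = r :=
      ⟨⟨r, (norm_le_one_iff_val_nonneg r).mpr hr⟩, rfl⟩
    have hcoe : (s : ℚ_[2]) ^ 2 - 5 = ((s ^ 2 - 5 : ℤ_[2]) : ℚ_[2]) := by push_cast; rfl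
    rw [hcoe, PadicInt.valuation_coe, Int.even_coe_nat]
    exact PadicInt.even_valuation_sq_sub_five s

theorem exists_sq_sub_five_mul_sq_iff_even_valuation {x : ℚ_[2]} (hx : x ≠ 0) :
    (∃ u v : ℚ_[2], x = u ^ 2 - 5 * v ^ 2) ↔ Even x.valuation := by
  constructor
  · rintro ⟨u, v, rfl⟩
    rcases eq_or_ne v 0 with rfl | hv
    · simp
    have hx' : u ^ 2 - 5 * v ^ 2 = v ^ 2 * ((u / v) ^ 2 - 5) := by field_simp
    rw [hx'] at hx ⊢
    rw [valuation_mul (left_ne_zero_of_mul hx) (right_ne_zero_of_mul hx), valuation_pow]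
    exact (even_two_mul _).add (even_valuation_sq_sub_five _)
  · rintro ⟨k, hk⟩
    set g : ℚ_[2] := 2 ^ k
    have hg : g ≠ 0 := zpow_ne_zero k two_ne_zero
    have h2 : (2 : ℚ_[2]).valuation = 1 := by exact_mod_cast valuation_p (p := 2)
    have hv : (x / g ^ 2).valuation = 0 := by
      rw [div_eq_mul_inv, valuation_mul hx (inv_ne_zero (pow_ne_zero 2 hg)), valuation_inv,
        valuation_pow, valuation_zpow, h2, hk]
      ring
    have hw : ‖x / g ^ 2‖ = 1 := by
      rw [norm_eq_zpow_neg_valuation (div_ne_zero hx (pow_ne_zero 2 hg)), hv, neg_zero, zpow_zero]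
    obtain ⟨a, b, hab⟩ := PadicInt.exists_sq_sub_five_mul_sq_of_isUnit (PadicInt.mkUnits hw).isUnit
    refine ⟨g * a, g * b, ?_⟩
    rw [PadicInt.mkUnits_eq] at hab
    field_simp at hab
    linear_combination hab

variable (p : ℕ) [Fact p.Prime]

def evenValuationSet : Set ℚ_[p] := {x | x ≠ 0 ∧ Even x.valuation}

def posOddValuationSet : Set ℚ_[p] := {x | x = 0 ∨ (0 < x.valuation ∧ Odd x.valuation)}

theorem setOf_not_mem_and_one_add_mem :
    {x | x ∉ evenValuationSet p ∧ 1 + x ∈ evenValuationSet p} = posOddValuationSet p := by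
  ext x
  rcases eq_or_ne x 0 with rfl | hx
  · simp [evenValuationSet, posOddValuationSet]
  simp only [evenValuationSet, posOddValuationSet, Set.mem_ofPred_eq, hx, ne_eq, not_false_eq_true,
    true_and, false_or, Int.not_even_iff_odd]
  rcases lt_trichotomy x.valuation 0 with hneg | hzero | hpos
  · have : (1 + x).valuation = x.valuation := by
      rw [add_comm, valuation_add_of_valuation_lt hx (by rwa [valuation_one])]
    rw [this]
    exact iff_of_false (fun h => Int.not_even_iff_odd.mpr h.1 h.2.2) (fun h => lt_asymm h.1 hneg)
  · simp [hzero]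
  · have hlt : (1 : ℚ_[p]).valuation < x.valuation := by rwa [valuation_one]
    simp [add_ne_zero_of_valuation_lt one_ne_zero hlt, valuation_add_of_valuation_lt one_ne_zero hlt,
      hpos]

theorem setOf_mem_and_forall_mul_mem :
    {x | x ∈ evenValuationSet p ∧ ∀ y ∈ posOddValuationSet p, x * y ∈ posOddValuationSet p} =
      {x | x ≠ 0 ∧ 0 ≤ x.valuation ∧ Even x.valuation} := by
  ext x
  simp only [evenValuationSet, posOddValuationSet, Set.mem_ofPred_eq]
  constructor
  · rintro ⟨⟨hx, heven⟩, hmul⟩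
    have hp : (p : ℚ_[p]) ≠ 0 := Nat.cast_ne_zero.mpr (Fact.out : p.Prime).ne_zero
    rcases hmul p (Or.inr ⟨by simp, by simp⟩) with h | ⟨hpos, -⟩
    · exact absurd h (mul_ne_zero hx hp)
    · rw [valuation_mul hx hp, valuation_p] at hpos
      exact ⟨hx, by omega, heven⟩
  · rintro ⟨hx, hnonneg, heven⟩
    refine ⟨⟨hx, heven⟩, ?_⟩
    rintro y (rfl | ⟨hpos, hodd⟩)
    · exact Or.inl (mul_zero x)
    · have hy : y ≠ 0 := by rintro rfl; simp at hpos
      rw [valuation_mul hx hy]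
      exact Or.inr ⟨by omega, heven.add_odd hodd⟩

theorem range_coe_eq_setOf_valuation_nonneg :
    Set.range ((↑) : ℤ_[p] → ℚ_[p]) = {x | 0 ≤ x.valuation} := by
  ext x
  constructor
  · rintro ⟨z, rfl⟩
    exact PadicInt.valuation_coe_nonneg
  · intro hx
    exact ⟨⟨x, (norm_le_one_iff_val_nonneg x).mpr hx⟩, rfl⟩

theorem posOddValuationSet_union :
    posOddValuationSet p ∪ {x | x ≠ 0 ∧ 0 ≤ x.valuation ∧ Even x.valuation} =
      Set.range ((↑) : ℤ_[p] → ℚ_[p]) := by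
  rw [range_coe_eq_setOf_valuation_nonneg]
  ext x
  rcases eq_or_ne x 0 with rfl | hx
  · simp [posOddValuationSet]
  simp only [posOddValuationSet, Set.mem_union, Set.mem_ofPred_eq, hx, false_or, ne_eq,
    not_false_eq_true, true_and]
  rcases Int.even_or_odd x.valuation with h | h
  · simp [h, ← Int.not_even_iff_odd]
  · have : x.valuation ≠ 0 := by rintro h0; simp [h0] at h
    simp [h, ← Int.not_odd_iff_even]
    omega

end Padic

/-- For T = N(5) ⊆ ℚ₂, the set O₁(T) consists of 0 together with the 2-adic
numbers of positive odd valuation, O₂(T) consists of the nonzero 2-adic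
integers of even valuation, and O(T) = O₁(T) ∪ O₂(T) = ℤ₂. -/
theorem stmt_11 :
    let T : Set ℚ_[2] := {x | x ≠ 0 ∧ ∃ u v : ℚ_[2], x = u ^ 2 - 5 * v ^ 2}
    let O1 : Set ℚ_[2] := {x | x ∉ T ∧ 1 + x ∈ T}
    let O2 : Set ℚ_[2] := {x | x ∈ T ∧ ∀ y ∈ O1, x * y ∈ O1}
    O1 = {x : ℚ_[2] | x = 0 ∨ (0 < x.valuation ∧ Odd x.valuation)} ∧
    O2 = {x : ℚ_[2] | x ≠ 0 ∧ 0 ≤ x.valuation ∧ Even x.valuation} ∧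
    O1 ∪ O2 = Set.range ((↑) : ℤ_[2] → ℚ_[2]) := by
  intro T O1 O2
  have hT : T = Padic.evenValuationSet 2 :=
    Set.ext fun _ => and_congr_right Padic.exists_sq_sub_five_mul_sq_iff_even_valuation
  have hO1 : O1 = Padic.posOddValuationSet 2 := by
    simp only [O1, hT]
    exact Padic.setOf_not_mem_and_one_add_mem 2
  have hO2 : O2 = {x | x ≠ 0 ∧ 0 ≤ x.valuation ∧ Even x.valuation} := by
    simp only [O2, hT, hO1]
    exact Padic.setOf_mem_and_forall_mul_mem 2
  exact ⟨hO1, hO2, by rw [hO1, hO2]; exact Padic.posOddValuationSet_union 2⟩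
end

section
/- Let K be a field of characteristic 0 such that -1, 2, 5 form an 𝔽₂-basis of K^×/(K^×)², with quadratic norm groups N(-1) = ⟨2,5⟩, N(2) = ⟨-1,2⟩, N(5) = ⟨-1,5⟩, N(10) = ⟨-1,10⟩, N(-2) = ⟨2,-5⟩, N(-5) = ⟨-2,5⟩, N(-10) = ⟨-2,-5⟩ (all of index 2), and such that 3 ∼ -5 mod squares. If x ∈ K with x ∼ 2 mod squares and 1 + x ∈ (K^×)², then 1 + 2x ∈ N(5) and 1 + 4x ∈ N(5). -/
def E {K : Type*} [Field K] (t : Bool × Bool × Bool) : K :=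
  (if t.1 then (-1 : K) else 1) * (if t.2.1 then 2 else 1) * (if t.2.2 then 5 else 1)

theorem pow_sq {K : Type*} [Field K] (a : K) (ha : a ≠ 0) (n : ℕ) :
    ∃ b : K, b ≠ 0 ∧ a ^ n = (if n % 2 = 1 then a else 1) * b ^ 2 := by
  refine ⟨a ^ (n / 2), pow_ne_zero _ ha, ?_⟩
  conv_lhs => rw [← Nat.div_add_mod n 2]
  rcases Nat.mod_two_eq_zero_or_one n with h | h <;>
    simp [h, pow_add, pow_mul', mul_comm]

/-- Lemma 4.4 (first case): let K be a field of characteristic 0 whose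
square-class group has 𝔽₂-basis -1, 2, 5, with the ℚ₂-lattice of quadratic
norm groups (all of index 2) and 3 ∼ -5 mod squares.  If x ∼ 2 mod squares
and 1 + x is a nonzero square, then 1 + 2x ∈ N(5) and 1 + 4x ∈ N(5). -/
theorem stmt_12 (K : Type*) [Field K] [CharZero K]
    (N : K → Set K)
    (hN : ∀ a : K, N a = {x : K | x ≠ 0 ∧ ∃ u v : K, x = u ^ 2 - a * v ^ 2})
    (Sp : K → K → Set K)
    (hSp : ∀ a b : K, Sp a b =
      {x : K | ∃ (i j : ℕ) (z : K), z ≠ 0 ∧ x = a ^ i * b ^ j * z ^ 2})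
    -- -1, 2, 5 form an 𝔽₂-basis of Kˣ/(Kˣ)²
    (hbasis : ∀ x : K, x ≠ 0 → ∃! t : Bool × Bool × Bool, ∃ z : K, z ≠ 0 ∧
      x = (if t.1 then (-1 : K) else 1) * (if t.2.1 then 2 else 1) *
          (if t.2.2 then 5 else 1) * z ^ 2)
    -- the ℚ₂-lattice of quadratic norm groups
    (h1 : N (-1) = Sp 2 5) (h2 : N 2 = Sp (-1) 2) (h3 : N 5 = Sp (-1) 5)
    (h4 : N 10 = Sp (-1) 10) (h5 : N (-2) = Sp 2 (-5)) (h6 : N (-5) = Sp (-2) 5)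
    (h7 : N (-10) = Sp (-2) (-5))
    -- each norm group has index 2
    (hidx : ∀ a ∈ ({-1, 2, 5, 10, -2, -5, -10} : Set K),
      ∀ x y : K, x ≠ 0 → y ≠ 0 → x ∉ N a → y ∉ N a → x * y ∈ N a)
    -- 3 ∼ -5 modulo squares
    (h35 : ∃ z : K, z ≠ 0 ∧ (3 : K) = -5 * z ^ 2)
    (x : K) (hx : ∃ z : K, z ≠ 0 ∧ x = 2 * z ^ 2)
    (h1x : ∃ w : K, w ≠ 0 ∧ 1 + x = w ^ 2) :
    1 + 2 * x ∈ N 5 ∧ 1 + 4 * x ∈ N 5 := by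
  obtain ⟨z, hz, hxz⟩ := hx
  obtain ⟨w, hw, hwx⟩ := h1x
  obtain ⟨c, hc, hc3⟩ := h35
  have hw2 : w ^ 2 = 1 + 2 * z ^ 2 := by rw [← hwx, hxz]
  -- basic facts about E
  have hE : ∀ ρ : Bool × Bool × Bool, (E ρ : K) ≠ 0 := by
    rintro ⟨a, b, c⟩
    cases a <;> cases b <;> cases c <;> norm_num [E]
  -- uniqueness of canonical representations
  have uniq : ∀ (t : K) (τ σ : Bool × Bool × Bool),
      (∃ y : K, y ≠ 0 ∧ t = E τ * y ^ 2) → (∃ y : K, y ≠ 0 ∧ t = E σ * y ^ 2) → τ = σ := by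
    rintro t τ σ ⟨y1, hy1, e1⟩ ⟨y2, hy2, e2⟩
    have ht : t ≠ 0 := by
      rw [e1]; exact mul_ne_zero (hE τ) (pow_ne_zero _ hy1)
    obtain ⟨ρ, -, hρ⟩ := hbasis t ht
    have hτ := hρ τ ⟨y1, hy1, by simpa [E] using e1⟩
    have hσ := hρ σ ⟨y2, hy2, by simpa [E] using e2⟩
    rw [hτ, hσ]
  -- elements of the given E-class are not squares unless the class is trivial
  have nsq : ∀ (τ : Bool × Bool × Bool) (y : K), y ≠ 0 → (E τ : K) = y ^ 2 →
      τ = (false, false, false) := by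
    intro τ y hy h
    exact uniq (E τ) τ (false, false, false) ⟨1, one_ne_zero, by ring⟩
      ⟨y, hy, by rw [← h]; norm_num [E]⟩
  -- nonvanishing of the three key elements
  have ht1 : (1 : K) + 4 * z ^ 2 ≠ 0 := by
    intro h
    have h' : (E (true, false, false) : K) = (2 * z) ^ 2 := by
      norm_num [E]; linear_combination -h
    have := nsq _ _ (mul_ne_zero two_ne_zero hz) h'
    simp at this
  have ht2 : (1 : K) + 8 * z ^ 2 ≠ 0 := by
    intro h
    have h' : (E (true, true, false) : K) = (4 * z) ^ 2 := by
      norm_num [E]; linear_combination -2 * h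
    have := nsq _ _ (mul_ne_zero (by norm_num) hz) h'
    simp at this
  have ht3 : (3 : K) + 4 * z ^ 2 ≠ 0 := by
    intro h
    have h' : (E (false, false, true) : K) = (2 * z / c) ^ 2 := by
      norm_num [E]
      field_simp
      linear_combination hc3 - h
    have := nsq _ _ (div_ne_zero (mul_ne_zero two_ne_zero hz) hc) h'
    simp at this
  -- membership in norm groups from explicit representations
  have memN : ∀ (a t u v : K), t ≠ 0 → t = u ^ 2 - a * v ^ 2 → t ∈ N a := by
    intro a t u v ht h
    rw [hN]; exact ⟨ht, u, v, h⟩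
  -- from Sp-membership to a canonical representation
  have spC : ∀ (a b : K) (f : Bool → Bool → Bool × Bool × Bool),
      (∀ p q : Bool, (if p then a else 1) * (if q then b else 1) = (E (f p q) : K)) →
      a ≠ 0 → b ≠ 0 → ∀ t : K, t ∈ Sp a b →
      ∃ (p q : Bool) (y : K), y ≠ 0 ∧ t = E (f p q) * y ^ 2 := by
    intro a b f hf ha hb t ht
    rw [hSp] at ht
    obtain ⟨i, j, y, hy, hrep⟩ := ht
    obtain ⟨b1, hb1, e1⟩ := pow_sq a ha i
    obtain ⟨b2, hb2, e2⟩ := pow_sq b hb j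
    refine ⟨decide (i % 2 = 1), decide (j % 2 = 1), b1 * b2 * y,
      mul_ne_zero (mul_ne_zero hb1 hb2) hy, ?_⟩
    rw [hrep, e1, e2, ← hf]
    rcases Nat.mod_two_eq_zero_or_one i with hi | hi <;>
      rcases Nat.mod_two_eq_zero_or_one j with hj | hj <;>
        simp [hi, hj] <;> ring
  -- the six instances we need
  have hf25 : ∀ p q : Bool, (if p then (2:K) else 1) * (if q then 5 else 1)
      = (E ((false, p, q) : Bool × Bool × Bool) : K) := by
    intro p q; cases p <;> cases q <;> norm_num [E]
  have hf2m5 : ∀ p q : Bool, (if p then (2:K) else 1) * (if q then -5 else 1)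
      = (E ((q, p, q) : Bool × Bool × Bool) : K) := by
    intro p q; cases p <;> cases q <;> norm_num [E]
  have hfm110 : ∀ p q : Bool, (if p then (-1:K) else 1) * (if q then 10 else 1)
      = (E ((p, q, q) : Bool × Bool × Bool) : K) := by
    intro p q; cases p <;> cases q <;> norm_num [E]
  have hfm15 : ∀ p q : Bool, (if p then (-1:K) else 1) * (if q then 5 else 1)
      = (E ((p, false, q) : Bool × Bool × Bool) : K) := by
    intro p q; cases p <;> cases q <;> norm_num [E]
  have hfm12 : ∀ p q : Bool, (if p then (-1:K) else 1) * (if q then 2 else 1)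
      = (E ((p, q, false) : Bool × Bool × Bool) : K) := by
    intro p q; cases p <;> cases q <;> norm_num [E]
  have hfm2m5 : ∀ p q : Bool, (if p then (-2:K) else 1) * (if q then -5 else 1)
      = (E ((xor p q, p, q) : Bool × Bool × Bool) : K) := by
    intro p q; cases p <;> cases q <;> norm_num [E]
  -- t₂ = 1+8z² : class is (d,d,d)
  have m1 : ((1:K) + 8 * z ^ 2) ∈ N (-2) := memN _ _ 1 (2 * z) ht2 (by ring)
  rw [h5] at m1
  obtain ⟨p1, q1, y1, hy1, e1⟩ := spC 2 (-5) _ hf2m5 two_ne_zero (by norm_num) _ m1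
  have m2 : ((1:K) + 8 * z ^ 2) ∈ N 10 := memN _ _ w (c * z) ht2 (by
    linear_combination -hw2 + 2 * z ^ 2 * hc3)
  rw [h4] at m2
  obtain ⟨p2, q2, y2, hy2, e2⟩ := spC (-1) 10 _ hfm110 (by norm_num) (by norm_num) _ m2
  have h12 := uniq _ _ _ ⟨y1, hy1, e1⟩ ⟨y2, hy2, e2⟩
  simp only [Prod.mk.injEq] at h12
  obtain ⟨hA, hB, hC⟩ := h12
  have hp1q1 : p1 = q1 := by rw [hB, ← hC]
  rw [hp1q1] at e1
  -- t₃ = 3+4z² : class is (e,f,e)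
  have m3 : ((3:K) + 4 * z ^ 2) ∈ N 5 := memN _ _ (2 * z) c ht3 (by linear_combination hc3)
  rw [h3] at m3
  obtain ⟨p3, q3, y3, hy3, e3⟩ := spC (-1) 5 _ hfm15 (by norm_num) (by norm_num) _ m3
  have m4 : ((3:K) + 4 * z ^ 2) ∈ N (-2) := memN _ _ 1 w ht3 (by linear_combination -2 * hw2)
  rw [h5] at m4
  obtain ⟨p4, q4, y4, hy4, e4⟩ := spC 2 (-5) _ hf2m5 two_ne_zero (by norm_num) _ m4
  have h34 := uniq _ _ _ ⟨y3, hy3, e3⟩ ⟨y4, hy4, e4⟩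
  simp only [Prod.mk.injEq] at h34
  obtain ⟨hD, hE', hF⟩ := h34
  have hp3q3 : q3 = p3 := by rw [hF, ← hD]
  rw [hp3q3] at e3
  -- show p3 = true, i.e. t₃ ∼ -5
  have hp3 : p3 = true := by
    cases p3 with
    | true => rfl
    | false =>
      exfalso
      -- t₃ is a square
      have e3' : (3:K) + 4 * z ^ 2 = y3 ^ 2 := by
        rw [e3]; norm_num [E]
      -- then 2t₂ = (2y₃)² - 10 ∈ N(10)
      have h2t2 : (2:K) * (1 + 8 * z ^ 2) ≠ 0 := mul_ne_zero two_ne_zero ht2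
      have m5 : ((2:K) * (1 + 8 * z ^ 2)) ∈ N 10 := memN _ _ (2 * y3) 1 h2t2 (by
        linear_combination 4 * e3')
      rw [h4] at m5
      obtain ⟨p5, q5, y5, hy5, e5⟩ := spC (-1) 10 _ hfm110 (by norm_num) (by norm_num) _ m5
      -- but t₂ has class (d,d,d), so 2t₂ has class (d, ¬d, d)
      cases q1 with
      | false =>
        have e1' : (2:K) * (1 + 8 * z ^ 2) = E ((false, true, false) : Bool × Bool × Bool) * y1 ^ 2 := by
          rw [e1]; norm_num [E]
        have := uniq _ _ _ ⟨y1, hy1, e1'⟩ ⟨y5, hy5, e5⟩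
        simp only [Prod.mk.injEq] at this
        obtain ⟨-, hq, hr⟩ := this
        rw [← hr] at hq; simp at hq
      | true =>
        have e1' : (2:K) * (1 + 8 * z ^ 2) = E ((true, false, true) : Bool × Bool × Bool) * (2 * y1) ^ 2 := by
          rw [e1]; norm_num [E]; ring
        have := uniq _ _ _ ⟨2 * y1, mul_ne_zero two_ne_zero hy1, e1'⟩ ⟨y5, hy5, e5⟩
        simp only [Prod.mk.injEq] at this
        obtain ⟨-, hq, hr⟩ := this
        rw [← hr] at hq; simp at hq
  rw [hp3] at e3
  have e3' : (3:K) + 4 * z ^ 2 = -5 * y3 ^ 2 := by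
    rw [e3]; norm_num [E]
  -- t₁ = 1+4z² : class is (f,b,f)
  have m6 : ((1:K) + 4 * z ^ 2) ∈ N (-1) := memN _ _ 1 (2 * z) ht1 (by ring)
  rw [h1] at m6
  obtain ⟨p6, q6, y6, hy6, e6⟩ := spC 2 5 _ hf25 two_ne_zero (by norm_num) _ m6
  have m7 : ((1:K) + 4 * z ^ 2) ∈ N (-2) := memN _ _ w z ht1 (by linear_combination -hw2)
  rw [h5] at m7
  obtain ⟨p7, q7, y7, hy7, e7⟩ := spC 2 (-5) _ hf2m5 two_ne_zero (by norm_num) _ m7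
  have h67 := uniq _ _ _ ⟨y6, hy6, e6⟩ ⟨y7, hy7, e7⟩
  simp only [Prod.mk.injEq] at h67
  obtain ⟨hG, hH, hI⟩ := h67
  have hq6 : q6 = false := by rw [hI, ← hG]
  rw [hq6] at e6
  -- show p6 = false, i.e. t₁ is a square
  have hp6 : p6 = false := by
    cases p6 with
    | false => rfl
    | true =>
      exfalso
      -- t₁ = 2y₆² , and -2t₁ = 2² + 10 y₃² ∈ N(-10)
      have e6' : (1:K) + 4 * z ^ 2 = 2 * y6 ^ 2 := by
        rw [e6]; norm_num [E]
      have hm2t1 : -((2:K) * (1 + 4 * z ^ 2)) ≠ 0 :=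
        neg_ne_zero.mpr (mul_ne_zero two_ne_zero ht1)
      have m8 : (-((2:K) * (1 + 4 * z ^ 2))) ∈ N (-10) := memN _ _ 2 y3 hm2t1 (by
        linear_combination -2 * e3')
      rw [h7] at m8
      obtain ⟨p8, q8, y8, hy8, e8⟩ := spC (-2) (-5) _ hfm2m5 (by norm_num) (by norm_num) _ m8
      have e6'' : -((2:K) * (1 + 4 * z ^ 2)) = E ((true, false, false) : Bool × Bool × Bool) * (2 * y6) ^ 2 := by
        norm_num [E]; linear_combination 2 * e6'
      have := uniq _ _ _ ⟨2 * y6, mul_ne_zero two_ne_zero hy6, e6''⟩ ⟨y8, hy8, e8⟩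
      simp only [Prod.mk.injEq] at this
      obtain ⟨hx1, hx2, hx3⟩ := this
      rw [← hx2, ← hx3] at hx1
      simp at hx1
  rw [hp6] at e6
  have e6' : (1:K) + 4 * z ^ 2 = y6 ^ 2 := by
    rw [e6]; norm_num [E]
  -- show q1 = false, i.e. t₂ is a square
  have hq1 : q1 = false := by
    cases q1 with
    | false => rfl
    | true =>
      exfalso
      have e1'' : (1:K) + 8 * z ^ 2 = -10 * y1 ^ 2 := by
        rw [e1]; norm_num [E]
      -- -t₂ = 1 - 2 y₆² ∈ N(2)
      have m9 : (-((1:K) + 8 * z ^ 2)) ∈ N 2 := memN _ _ 1 y6 (neg_ne_zero.mpr ht2) (by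
        linear_combination -2 * e6')
      rw [h2] at m9
      obtain ⟨p9, q9, y9, hy9, e9⟩ := spC (-1) 2 _ hfm12 (by norm_num) (by norm_num) _ m9
      have e1''' : -((1:K) + 8 * z ^ 2) = E ((false, true, true) : Bool × Bool × Bool) * y1 ^ 2 := by
        norm_num [E]; linear_combination -e1''
      have := uniq _ _ _ ⟨y1, hy1, e1'''⟩ ⟨y9, hy9, e9⟩
      simp only [Prod.mk.injEq] at this
      obtain ⟨-, -, hx3⟩ := this
      simp at hx3
  rw [hq1] at e1
  have e1' : (1:K) + 8 * z ^ 2 = y1 ^ 2 := by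
    rw [e1]; norm_num [E]
  -- conclusion
  have hx1 : (1:K) + 2 * x = 1 + 4 * z ^ 2 := by rw [hxz]; ring
  have hx2 : (1:K) + 4 * x = 1 + 8 * z ^ 2 := by rw [hxz]; ring
  rw [hx1, hx2]
  constructor
  · exact memN _ _ y6 0 ht1 (by linear_combination e6')
  · exact memN _ _ y1 0 ht2 (by linear_combination e1')
end

section
/- Let K be a field satisfying the ℚ₂-norm-lattice hypotheses (as in the previous statement, with basis -1,2,5 of K^×/(K^×)², the specified norm groups, and 3 ∼ -5). Let O₁ = {x ∈ K : x ∉ N(5), 1 + x ∈ N(5)} ∪ {0}. If for every x ∈ O₁, 1 + 2x ∈ N(5) and 1 + 4x ∈ N(5), then O₁ is closed under multiplication by -1, 5, and 1/5. -/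
/-!
The norm group `N(a) = {u² - a v² ≠ 0}` is a subgroup of `Kˣ`, so `x ↦ -x/(1+x)` maps `O₁`
into itself, and so does `x ↦ x/(1+x)` once `1 + 2x ∈ N(5)`; feeding these points to the
hypothesis on `1 + 2y` and `1 + 4y` gives `1 - x, 1 ± 3x, 1 + 5x ∈ N(5)`, which settles `-x`
and `5x`.

For `x/5` one needs `5 + x ∈ N(5)`. Since `K` has the square classes and norm groups of `ℚ₂`,
`b ∈ N(a)` is decided by the `ℚ₂` Hilbert symbol, a bilinear form on `K^×/K^×² ≅ 𝔽₂³`. Every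
relation `α + β = γ` makes `αγ = α² - (-αβ)` a norm from `K(√(-αβ))`, a linear condition on the
classes. Four such relations among `1 ± x`, `1 ± 3x` and `5 + x` (and `-7 ∼ 1`, which follows
from `3 ∼ -5` in the same way) force the `2`-coordinate of the class of `5 + x` to vanish.
-/

namespace Q2Norm

variable {K : Type*} [Field K]

def normGroup (a : K) : Set K := {x : K | x ≠ 0 ∧ ∃ u v : K, x = u ^ 2 - a * v ^ 2}

def sqSpan (a b : K) : Set K :=
  {x : K | ∃ (i j : ℕ) (z : K), z ≠ 0 ∧ x = a ^ i * b ^ j * z ^ 2}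

section NormGroup

variable {a x y : K}

theorem ne_zero_of_mem_normGroup (h : x ∈ normGroup a) : x ≠ 0 := h.1

theorem sub_mem_normGroup {u v : K} (h : u ^ 2 - a * v ^ 2 ≠ 0) :
    u ^ 2 - a * v ^ 2 ∈ normGroup a :=
  ⟨h, u, v, rfl⟩

theorem mul_mem_normGroup (hx : x ∈ normGroup a) (hy : y ∈ normGroup a) :
    x * y ∈ normGroup a := by
  obtain ⟨hx0, u, v, rfl⟩ := hx
  obtain ⟨hy0, s, t, rfl⟩ := hy
  exact ⟨mul_ne_zero hx0 hy0, u * s + a * v * t, u * t + v * s, by ring⟩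

theorem inv_mem_normGroup (hx : x ∈ normGroup a) : x⁻¹ ∈ normGroup a := by
  obtain ⟨hx0, u, v, rfl⟩ := hx
  refine ⟨inv_ne_zero hx0, u / (u ^ 2 - a * v ^ 2), v / (u ^ 2 - a * v ^ 2), ?_⟩
  field_simp

theorem div_mem_normGroup (hx : x ∈ normGroup a) (hy : y ∈ normGroup a) :
    x / y ∈ normGroup a :=
  div_eq_mul_inv x y ▸ mul_mem_normGroup hx (inv_mem_normGroup hy)

theorem mem_normGroup_of_mul_mem (hx : x ∈ normGroup a) (hxy : x * y ∈ normGroup a) :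
    y ∈ normGroup a := by
  simpa [ne_zero_of_mem_normGroup hx] using mul_mem_normGroup (inv_mem_normGroup hx) hxy

theorem normGroup_mul_sq_subset (z : K) : normGroup (a * z ^ 2) ⊆ normGroup a := by
  rintro _ ⟨hx0, u, v, rfl⟩
  exact ⟨hx0, u, z * v, by ring⟩

end NormGroup

def O₁ (a : K) : Set K := {x : K | x ∉ normGroup a ∧ 1 + x ∈ normGroup a}

section O₁

variable {a x : K}

theorem neg_div_one_add_mem_O₁ (hneg : (-1 : K) ∈ normGroup a) (hx : x ∈ O₁ a) :
    -x / (1 + x) ∈ O₁ a := by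
  have hx₁ := ne_zero_of_mem_normGroup hx.2
  refine ⟨fun h => hx.1 ?_, ?_⟩
  · have e : x = -1 * (-x / (1 + x)) * (1 + x) := by field_simp
    exact e ▸ mul_mem_normGroup (mul_mem_normGroup hneg h) hx.2
  · have e : 1 + -x / (1 + x) = (1 + x)⁻¹ := by field_simp; ring
    exact e ▸ inv_mem_normGroup hx.2

theorem div_one_add_mem_O₁ (hx : x ∈ O₁ a) (h₂ : 1 + 2 * x ∈ normGroup a) :
    x / (1 + x) ∈ O₁ a := by
  have hx₁ := ne_zero_of_mem_normGroup hx.2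
  refine ⟨fun h => hx.1 ?_, ?_⟩
  · have e : x = x / (1 + x) * (1 + x) := by field_simp
    exact e ▸ mul_mem_normGroup h hx.2
  · have e : 1 + x / (1 + x) = (1 + 2 * x) / (1 + x) := by field_simp; ring
    exact e ▸ div_mem_normGroup h₂ hx.2

theorem one_sub_mem_of_mem_O₁ (hneg : (-1 : K) ∈ normGroup a)
    (hO : ∀ y ∈ O₁ a, 1 + 2 * y ∈ normGroup a ∧ 1 + 4 * y ∈ normGroup a)
    (hx : x ∈ O₁ a) :
    1 - x ∈ normGroup a := by
  have hx₁ := ne_zero_of_mem_normGroup hx.2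
  have e : 1 - x = (1 + 2 * (-x / (1 + x))) * (1 + x) := by field_simp; ring
  exact e ▸ mul_mem_normGroup (hO _ (neg_div_one_add_mem_O₁ hneg hx)).1 hx.2

theorem one_sub_three_mul_mem_of_mem_O₁ (hneg : (-1 : K) ∈ normGroup a)
    (hO : ∀ y ∈ O₁ a, 1 + 2 * y ∈ normGroup a ∧ 1 + 4 * y ∈ normGroup a)
    (hx : x ∈ O₁ a) :
    1 - 3 * x ∈ normGroup a := by
  have hx₁ := ne_zero_of_mem_normGroup hx.2
  have e : 1 - 3 * x = (1 + 4 * (-x / (1 + x))) * (1 + x) := by field_simp; ring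
  exact e ▸ mul_mem_normGroup (hO _ (neg_div_one_add_mem_O₁ hneg hx)).2 hx.2

theorem neg_mem_O₁ (hneg : (-1 : K) ∈ normGroup a)
    (hO : ∀ y ∈ O₁ a, 1 + 2 * y ∈ normGroup a ∧ 1 + 4 * y ∈ normGroup a)
    (hx : x ∈ O₁ a) :
    -x ∈ O₁ a :=
  ⟨fun h => hx.1 (by simpa using mul_mem_normGroup hneg h),
    by simpa [sub_eq_add_neg] using one_sub_mem_of_mem_O₁ hneg hO hx⟩

theorem one_add_three_mul_mem_of_mem_O₁ (hneg : (-1 : K) ∈ normGroup a)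
    (hO : ∀ y ∈ O₁ a, 1 + 2 * y ∈ normGroup a ∧ 1 + 4 * y ∈ normGroup a)
    (hx : x ∈ O₁ a) :
    1 + 3 * x ∈ normGroup a := by
  simpa using one_sub_three_mul_mem_of_mem_O₁ hneg hO (neg_mem_O₁ hneg hO hx)

theorem one_add_five_mul_mem_of_mem_O₁
    (hO : ∀ y ∈ O₁ a, 1 + 2 * y ∈ normGroup a ∧ 1 + 4 * y ∈ normGroup a)
    (hx : x ∈ O₁ a) :
    1 + 5 * x ∈ normGroup a := by
  have hx₁ := ne_zero_of_mem_normGroup hx.2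
  have h₄ := (hO _ (div_one_add_mem_O₁ hx (hO x hx).1)).2
  have e : 1 + 5 * x = (1 + 4 * (x / (1 + x))) * (1 + x) := by field_simp; ring
  exact e ▸ mul_mem_normGroup h₄ hx.2

end O₁

def basisElt (t : Bool × Bool × Bool) : K :=
  (if t.1 then -1 else 1) * (if t.2.1 then 2 else 1) * (if t.2.2 then 5 else 1)

def IsSqClass (x : K) (t : Bool × Bool × Bool) : Prop :=
  ∃ z : K, z ≠ 0 ∧ x = basisElt t * z ^ 2

def sqMul (s t : Bool × Bool × Bool) : Bool × Bool × Bool :=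
  (s.1 ^^ t.1, s.2.1 ^^ t.2.1, s.2.2 ^^ t.2.2)

/-- The `ℚ₂` Hilbert symbol in additive notation on exponent vectors of `-1, 2, 5`:
`hilb s t = false` iff the symbol is `1`. -/
def hilb (s t : Bool × Bool × Bool) : Bool :=
  (s.1 && t.1) ^^ (s.2.1 && t.2.2) ^^ (s.2.2 && t.2.1)

theorem hilb_sqMul (s t u : Bool × Bool × Bool) :
    hilb s (sqMul t u) = (hilb s t ^^ hilb s u) := by
  revert s t u
  decide

variable {x y : K} {s t : Bool × Bool × Bool}

structure IsQ2Like (K : Type*) [Field K] : Prop where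
  existsUnique_isSqClass : ∀ x : K, x ≠ 0 → ∃! t, IsSqClass x t
  normGroup_neg_one : normGroup (-1 : K) = sqSpan 2 5
  normGroup_two : normGroup (2 : K) = sqSpan (-1) 2
  normGroup_five : normGroup (5 : K) = sqSpan (-1) 5
  normGroup_ten : normGroup (10 : K) = sqSpan (-1) 10
  normGroup_neg_two : normGroup (-2 : K) = sqSpan 2 (-5)
  normGroup_neg_five : normGroup (-5 : K) = sqSpan (-2) 5
  normGroup_neg_ten : normGroup (-10 : K) = sqSpan (-2) (-5)

theorem IsQ2Like.exists_isSqClass (hK : IsQ2Like K) {x : K} (hx : x ≠ 0) :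
    ∃ t, IsSqClass x t :=
  (hK.existsUnique_isSqClass x hx).exists

theorem ite_mul_ite_eq_xor_mul_sq (p q : Bool) (c : K) :
    (if p then c else 1) * (if q then c else 1) =
      (if (p ^^ q) then c else 1) * (if (p && q) then c else 1) ^ 2 := by
  cases p <;> cases q <;> simp [sq]

def hilbertKernel (s : Bool × Bool × Bool) : Set K :=
  {x | ∃ t, IsSqClass x t ∧ hilb s t = false}

theorem sq_mem_hilbertKernel {z : K} (hz : z ≠ 0) : z ^ 2 ∈ hilbertKernel s :=
  ⟨(false, false, false), ⟨z, hz, by simp [basisElt]⟩, by simp [hilb]⟩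

theorem mem_normGroup_five_of_isSqClass (hK : IsQ2Like K) {e g : Bool}
    (h : IsSqClass x (e, false, g)) : x ∈ normGroup 5 := by
  obtain ⟨z, hz, rfl⟩ := h
  rw [hK.normGroup_five]
  exact ⟨e.toNat, g.toNat, z, hz, by cases e <;> cases g <;> simp [basisElt]⟩

section CharZero

variable [CharZero K]

theorem basisElt_ne_zero (t : Bool × Bool × Bool) : (basisElt t : K) ≠ 0 := by
  simp only [basisElt]
  split_ifs <;> norm_num

theorem IsSqClass.ne_zero (h : IsSqClass x t) : x ≠ 0 := by
  obtain ⟨z, hz, rfl⟩ := h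
  exact mul_ne_zero (basisElt_ne_zero t) (pow_ne_zero 2 hz)

theorem IsQ2Like.isSqClass_unique (hK : IsQ2Like K) (hs : IsSqClass x s) (ht : IsSqClass x t) :
    s = t :=
  (hK.existsUnique_isSqClass x hs.ne_zero).unique hs ht

theorem IsSqClass.mul (hx : IsSqClass x s) (hy : IsSqClass y t) :
    IsSqClass (x * y) (sqMul s t) := by
  obtain ⟨z, hz, rfl⟩ := hx
  obtain ⟨w, hw, rfl⟩ := hy
  refine ⟨basisElt (s.1 && t.1, s.2.1 && t.2.1, s.2.2 && t.2.2) * (z * w),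
    mul_ne_zero (basisElt_ne_zero _) (mul_ne_zero hz hw), ?_⟩
  dsimp only [basisElt, sqMul]
  calc _ = ((if s.1 then -1 else 1) * (if t.1 then -1 else 1)) *
        ((if s.2.1 then 2 else 1) * (if t.2.1 then 2 else 1)) *
        ((if s.2.2 then 5 else 1) * (if t.2.2 then 5 else 1)) * (z * w) ^ 2 := by ring
    _ = _ := by simp only [ite_mul_ite_eq_xor_mul_sq]; ring

theorem isSqClass_one : IsSqClass (1 : K) (false, false, false) :=
  ⟨1, one_ne_zero, by norm_num [basisElt]⟩

theorem isSqClass_neg_one : IsSqClass (-1 : K) (true, false, false) :=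
  ⟨1, one_ne_zero, by norm_num [basisElt]⟩

theorem isSqClass_two : IsSqClass (2 : K) (false, true, false) :=
  ⟨1, one_ne_zero, by norm_num [basisElt]⟩

theorem isSqClass_neg_two : IsSqClass (-2 : K) (true, true, false) :=
  ⟨1, one_ne_zero, by norm_num [basisElt]⟩

theorem isSqClass_five : IsSqClass (5 : K) (false, false, true) :=
  ⟨1, one_ne_zero, by norm_num [basisElt]⟩

theorem isSqClass_neg_five : IsSqClass (-5 : K) (true, false, true) :=
  ⟨1, one_ne_zero, by norm_num [basisElt]⟩

theorem isSqClass_ten : IsSqClass (10 : K) (false, true, true) :=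
  ⟨1, one_ne_zero, by norm_num [basisElt]⟩

theorem isSqClass_neg_four : IsSqClass (-4 : K) (true, false, false) :=
  ⟨2, two_ne_zero, by norm_num [basisElt]⟩


theorem mul_mem_hilbertKernel (hx : x ∈ hilbertKernel s) (hy : y ∈ hilbertKernel s) :
    x * y ∈ hilbertKernel s := by
  obtain ⟨t, ht, hst⟩ := hx
  obtain ⟨u, hu, hsu⟩ := hy
  exact ⟨sqMul t u, ht.mul hu, by rw [hilb_sqMul, hst, hsu]; rfl⟩

theorem pow_mem_hilbertKernel (hx : x ∈ hilbertKernel s) (n : ℕ) :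
    x ^ n ∈ hilbertKernel s := by
  induction n with
  | zero => simpa using sq_mem_hilbertKernel (s := s) (one_ne_zero (α := K))
  | succ n ih => exact pow_succ x n ▸ mul_mem_hilbertKernel ih hx

theorem sqSpan_subset_hilbertKernel {p q : K} {t u : Bool × Bool × Bool}
    (hp : IsSqClass p t) (hq : IsSqClass q u) (ht : hilb s t = false) (hu : hilb s u = false) :
    sqSpan p q ⊆ hilbertKernel s := by
  rintro _ ⟨i, j, z, hz, rfl⟩
  exact mul_mem_hilbertKernel (mul_mem_hilbertKernel (pow_mem_hilbertKernel ⟨t, hp, ht⟩ i)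
    (pow_mem_hilbertKernel ⟨u, hq, hu⟩ j)) (sq_mem_hilbertKernel hz)

theorem normGroup_basisElt_subset (hK : IsQ2Like K) :
    ∀ s, normGroup (basisElt s : K) ⊆ hilbertKernel s := by
  rintro ⟨_ | _, _ | _, _ | _⟩ <;> norm_num [basisElt]
  · rintro x ⟨hx, -⟩
    obtain ⟨t, ht⟩ := hK.exists_isSqClass hx
    exact ⟨t, ht, by simp [hilb]⟩
  · rw [hK.normGroup_five]
    exact sqSpan_subset_hilbertKernel isSqClass_neg_one isSqClass_five rfl rfl
  · rw [hK.normGroup_two]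
    exact sqSpan_subset_hilbertKernel isSqClass_neg_one isSqClass_two rfl rfl
  · rw [hK.normGroup_ten]
    exact sqSpan_subset_hilbertKernel isSqClass_neg_one isSqClass_ten rfl rfl
  · rw [hK.normGroup_neg_one]
    exact sqSpan_subset_hilbertKernel isSqClass_two isSqClass_five rfl rfl
  · rw [hK.normGroup_neg_five]
    exact sqSpan_subset_hilbertKernel isSqClass_neg_two isSqClass_five rfl rfl
  · rw [hK.normGroup_neg_two]
    exact sqSpan_subset_hilbertKernel isSqClass_two isSqClass_neg_five rfl rfl
  · rw [hK.normGroup_neg_ten]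
    exact sqSpan_subset_hilbertKernel isSqClass_neg_two isSqClass_neg_five rfl rfl

theorem hilb_eq_false_of_mem_normGroup (hK : IsQ2Like K) {a b : K}
    (ha : IsSqClass a s) (hb : IsSqClass b t) (h : b ∈ normGroup a) : hilb s t = false := by
  obtain ⟨z, -, rfl⟩ := ha
  obtain ⟨u, hu, hsu⟩ := normGroup_basisElt_subset hK s (normGroup_mul_sq_subset z h)
  rwa [hK.isSqClass_unique hb hu]

theorem hilb_eq_false_of_add_eq (hK : IsQ2Like K) {α β γ : K} {a b c : Bool × Bool × Bool}
    (hα : IsSqClass α a) (hβ : IsSqClass β b) (hγ : IsSqClass γ c) (h : α + β = γ) :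
    hilb (sqMul (sqMul (true, false, false) a) b) (sqMul a c) = false := by
  refine hilb_eq_false_of_mem_normGroup hK ((isSqClass_neg_one.mul hα).mul hβ) (hα.mul hγ) ?_
  have e : α * γ = α ^ 2 - -1 * α * β * 1 ^ 2 := by rw [← h]; ring
  exact e ▸ sub_mem_normGroup (e ▸ mul_ne_zero hα.ne_zero hγ.ne_zero)

theorem isSqClass_seven (hK : IsQ2Like K) (h3 : IsSqClass (3 : K) (true, false, true)) :
    IsSqClass (7 : K) (true, false, false) := by
  obtain ⟨t, ht⟩ := hK.exists_isSqClass (by norm_num : (7 : K) ≠ 0)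
  have h₇ := isSqClass_neg_one.mul ht
  have r₁ := hilb_eq_false_of_add_eq hK h₇ isSqClass_one (isSqClass_neg_two.mul h3)
    (by norm_num : -1 * 7 + 1 = (-2 * 3 : K))
  have r₂ := hilb_eq_false_of_add_eq hK h₇ isSqClass_two isSqClass_neg_five
    (by norm_num : -1 * 7 + 2 = (-5 : K))
  have r₃ := hilb_eq_false_of_add_eq hK h₇ h3 isSqClass_neg_four
    (by norm_num : -1 * 7 + 3 = (-4 : K))
  obtain rfl : t = (true, false, false) := by
    clear ht h₇
    revert t
    decide
  exact ht

theorem exists_isSqClass_of_mem_normGroup_five (hK : IsQ2Like K) (h : x ∈ normGroup 5) :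
    ∃ e g, IsSqClass x (e, false, g) := by
  obtain ⟨⟨e, f, g⟩, ht⟩ := hK.exists_isSqClass (ne_zero_of_mem_normGroup h)
  have hf := hilb_eq_false_of_mem_normGroup hK isSqClass_five ht h
  obtain rfl : f = false := by simpa [hilb] using hf
  exact ⟨e, g, ht⟩

theorem five_add_mem_normGroup_five (hK : IsQ2Like K)
    (h3 : IsSqClass (3 : K) (true, false, true))
    (h₁ : 1 + x ∈ normGroup 5) (h₂ : 1 - x ∈ normGroup 5) (h₃ : 1 + 3 * x ∈ normGroup 5)
    (h₄ : 1 - 3 * x ∈ normGroup 5) (h₅ : 5 + x ≠ 0) : 5 + x ∈ normGroup 5 := by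
  obtain ⟨a₁, b₁, c₁⟩ := exists_isSqClass_of_mem_normGroup_five hK h₁
  obtain ⟨a₂, b₂, c₂⟩ := exists_isSqClass_of_mem_normGroup_five hK h₂
  obtain ⟨a₃, b₃, c₃⟩ := exists_isSqClass_of_mem_normGroup_five hK h₃
  obtain ⟨a₄, b₄, c₄⟩ := exists_isSqClass_of_mem_normGroup_five hK h₄
  obtain ⟨⟨e, f, g⟩, hT⟩ := hK.exists_isSqClass h₅
  have r₁ := hilb_eq_false_of_add_eq hK c₁ (isSqClass_neg_two.mul c₂)
    (isSqClass_neg_one.mul c₄) (by ring : 1 + x + -2 * (1 - x) = -1 * (1 - 3 * x))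
  have r₂ := hilb_eq_false_of_add_eq hK ((isSqClass_seven hK h3).mul c₂) (h3.mul c₃)
    (isSqClass_two.mul hT) (by ring : 7 * (1 - x) + 3 * (1 + 3 * x) = 2 * (5 + x))
  have r₃ := hilb_eq_false_of_add_eq hK (h3.mul c₁) (isSqClass_neg_two.mul c₃) c₄
    (by ring : 3 * (1 + x) + -2 * (1 + 3 * x) = 1 - 3 * x)
  have r₄ := hilb_eq_false_of_add_eq hK (isSqClass_neg_four.mul c₁) (isSqClass_neg_one.mul c₄)
    (isSqClass_neg_one.mul hT) (by ring : -4 * (1 + x) + -1 * (1 - 3 * x) = -1 * (5 + x))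
  obtain rfl : f = false := by
    clear c₁ c₂ c₃ c₄ hT
    revert a₁ b₁ a₂ b₂ a₃ b₃ a₄ b₄ e f g
    decide
  exact mem_normGroup_five_of_isSqClass hK hT

end CharZero

end Q2Norm

open Q2Norm

theorem stmt_13_general (K : Type*) [Field K] [CharZero K]
    (N : K → Set K)
    (hN : ∀ a : K, N a = {x : K | x ≠ 0 ∧ ∃ u v : K, x = u ^ 2 - a * v ^ 2})
    (Sp : K → K → Set K)
    (hSp : ∀ a b : K, Sp a b =
      {x : K | ∃ (i j : ℕ) (z : K), z ≠ 0 ∧ x = a ^ i * b ^ j * z ^ 2})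
    (hbasis : ∀ x : K, x ≠ 0 → ∃! t : Bool × Bool × Bool, ∃ z : K, z ≠ 0 ∧
      x = (if t.1 then (-1 : K) else 1) * (if t.2.1 then 2 else 1) *
          (if t.2.2 then 5 else 1) * z ^ 2)
    (h1 : N (-1) = Sp 2 5) (h2 : N 2 = Sp (-1) 2) (h3 : N 5 = Sp (-1) 5)
    (h4 : N 10 = Sp (-1) 10) (h5 : N (-2) = Sp 2 (-5)) (h6 : N (-5) = Sp (-2) 5)
    (h7 : N (-10) = Sp (-2) (-5))
    (h35 : ∃ z : K, z ≠ 0 ∧ (3 : K) = -5 * z ^ 2)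
    (h24 : ∀ x ∈ {x : K | x ∉ N 5 ∧ 1 + x ∈ N 5},
      1 + 2 * x ∈ N 5 ∧ 1 + 4 * x ∈ N 5) :
    ∀ x ∈ {x : K | x ∉ N 5 ∧ 1 + x ∈ N 5},
      (-x) ∈ {x : K | x ∉ N 5 ∧ 1 + x ∈ N 5} ∧
      (5 * x) ∈ {x : K | x ∉ N 5 ∧ 1 + x ∈ N 5} ∧
      (x / 5) ∈ {x : K | x ∉ N 5 ∧ 1 + x ∈ N 5} := by
  obtain rfl : N = normGroup := funext hN
  obtain rfl : Sp = sqSpan := funext fun a => funext (hSp a)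
  have hK : IsQ2Like K := ⟨hbasis, h1, h2, h3, h4, h5, h6, h7⟩
  have hthree : IsSqClass (3 : K) (true, false, true) := by
    obtain ⟨z, hz, h⟩ := h35
    exact ⟨z, hz, by rw [h]; norm_num [basisElt]⟩
  have hneg : (-1 : K) ∈ normGroup 5 := mem_normGroup_five_of_isSqClass hK isSqClass_neg_one
  have hfive : (5 : K) ∈ normGroup 5 := mem_normGroup_five_of_isSqClass hK isSqClass_five
  intro x hx
  have hx₅ : 5 + x ≠ 0 := fun h => hx.1 <| by
    simpa [eq_neg_of_add_eq_zero_right h] using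
      mem_normGroup_five_of_isSqClass hK isSqClass_neg_five
  have h5x : 5 + x ∈ normGroup 5 := five_add_mem_normGroup_five hK hthree hx.2
    (one_sub_mem_of_mem_O₁ hneg h24 hx) (one_add_three_mul_mem_of_mem_O₁ hneg h24 hx)
    (one_sub_three_mul_mem_of_mem_O₁ hneg h24 hx) hx₅
  refine ⟨neg_mem_O₁ hneg h24 hx,
    ⟨fun h => hx.1 (mem_normGroup_of_mul_mem hfive h), one_add_five_mul_mem_of_mem_O₁ h24 hx⟩,
    fun h => hx.1 (mul_div_cancel₀ x (by norm_num : (5 : K) ≠ 0) ▸ mul_mem_normGroup hfive h),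
    ?_⟩
  have e : 1 + x / 5 = (5 + x) / 5 := by ring
  exact e ▸ div_mem_normGroup h5x hfive

/-- Under the ℚ₂-norm-lattice hypotheses, if 1 + 2x, 1 + 4x ∈ N(5) for every
x ∈ O₁ = {x : x ∉ N(5), 1 + x ∈ N(5)}, then O₁ is closed under
multiplication by -1, 5 and 1/5. -/
theorem stmt_13 (K : Type*) [Field K] [CharZero K]
    (N : K → Set K)
    (hN : ∀ a : K, N a = {x : K | x ≠ 0 ∧ ∃ u v : K, x = u ^ 2 - a * v ^ 2})
    (Sp : K → K → Set K)
    (hSp : ∀ a b : K, Sp a b =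
      {x : K | ∃ (i j : ℕ) (z : K), z ≠ 0 ∧ x = a ^ i * b ^ j * z ^ 2})
    (hbasis : ∀ x : K, x ≠ 0 → ∃! t : Bool × Bool × Bool, ∃ z : K, z ≠ 0 ∧
      x = (if t.1 then (-1 : K) else 1) * (if t.2.1 then 2 else 1) *
          (if t.2.2 then 5 else 1) * z ^ 2)
    (h1 : N (-1) = Sp 2 5) (h2 : N 2 = Sp (-1) 2) (h3 : N 5 = Sp (-1) 5)
    (h4 : N 10 = Sp (-1) 10) (h5 : N (-2) = Sp 2 (-5)) (h6 : N (-5) = Sp (-2) 5)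
    (h7 : N (-10) = Sp (-2) (-5))
    (hidx : ∀ a ∈ ({-1, 2, 5, 10, -2, -5, -10} : Set K),
      ∀ x y : K, x ≠ 0 → y ≠ 0 → x ∉ N a → y ∉ N a → x * y ∈ N a)
    (h35 : ∃ z : K, z ≠ 0 ∧ (3 : K) = -5 * z ^ 2)
    (h24 : ∀ x ∈ {x : K | x ∉ N 5 ∧ 1 + x ∈ N 5},
      1 + 2 * x ∈ N 5 ∧ 1 + 4 * x ∈ N 5) :
    ∀ x ∈ {x : K | x ∉ N 5 ∧ 1 + x ∈ N 5},
      (-x) ∈ {x : K | x ∉ N 5 ∧ 1 + x ∈ N 5} ∧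
      (5 * x) ∈ {x : K | x ∉ N 5 ∧ 1 + x ∈ N 5} ∧
      (x / 5) ∈ {x : K | x ∉ N 5 ∧ 1 + x ∈ N 5} :=
  stmt_13_general K N hN Sp hSp hbasis h1 h2 h3 h4 h5 h6 h7 h35 h24
end
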